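/- Uniform covariance bounds on tilts imply entropic stability: let π be a probability measure on ℝ^d whose cumulant generating function χ(y) := log E_{x∼π}[exp(⟨y,x⟩)] is finite for every y ∈ ℝ^d, and suppose that for some α > 0 and every y ∈ ℝ^d the covariance matrix of the exponential tilt satisfies Cov(T_y π) ⪯ α I_d. Then π is α-entropically stable: for every y ∈ ℝ^d, ½‖b(T_y π) − b(π)‖₂² ≤ α · KL(T_y π ‖ π). -/

import Mathlib

open MeasureTheory Real

/-- Real-valued Kullback-Leibler divergence `KL(ν‖ρ) = ∫ log (dν/dρ) dν`. -/
noncomputable def klReal {α : Type*} [MeasurableSpace α] (ν ρ : Measure α) : ℝ :=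
  ∫ x, Real.log ((ν.rnDeriv ρ x).toReal) ∂ν

/-- The exponential tilt `T_y μ`: the probability measure with density proportional to
`exp ⟨y, ·⟩` with respect to `μ`. -/
noncomputable def expTilt (d : ℕ) (μ : Measure (EuclideanSpace ℝ (Fin d)))
    (y : EuclideanSpace ℝ (Fin d)) : Measure (EuclideanSpace ℝ (Fin d)) :=
  μ.withDensity (fun x => ENNReal.ofReal
    (Real.exp ((inner ℝ y x : ℝ)) / ∫ x', Real.exp ((inner ℝ y x' : ℝ)) ∂μ))

/-- The barycentre `b(μ) = E_{x∼μ}[x]` of a measure. -/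
noncomputable def bary (d : ℕ) (μ : Measure (EuclideanSpace ℝ (Fin d))) :
    EuclideanSpace ℝ (Fin d) :=
  ∫ x, x ∂μ

/-!
Write `χ(y) = log ∫ exp ⟪y, x⟫ dμ` and `b_y` for the barycentre of `T_y μ`. Then
`KL(T_y μ ‖ μ) = ⟪y, b_y⟫ - χ(y)`. Jensen's inequality under `T_y μ` gives the supporting
hyperplane bound `χ(y) + ⟪z - y, b_y⟫ ≤ χ(z)`, and since `t ↦ χ(t z)` has second derivative
`Var_{T_{tz} μ} ⟪z, ·⟫ ≤ α ‖z‖²`, Taylor's theorem gives `χ(z) ≤ ⟪z, b_0⟫ + α ‖z‖² / 2`.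
Together, `⟪z, b_y - b_0⟫ - α ‖z‖² / 2 ≤ KL(T_y μ ‖ μ)` for every `z`, and the choice
`z = (b_y - b_0) / α` is the claim.
-/

open ProbabilityTheory
open scoped RealInnerProductSpace

theorem le_add_deriv_add_of_iteratedDeriv_two_le {f : ℝ → ℝ} {K : ℝ} (hf : ContDiff ℝ 2 f)
    (hK : ∀ t, iteratedDeriv 2 f t ≤ K) : f 1 ≤ f 0 + deriv f 0 + K / 2 := by
  obtain ⟨u, -, hu⟩ := taylor_mean_remainder_lagrange_iteratedDeriv (n := 1) zero_ne_one
    (hf.contDiffOn (s := Set.uIcc 0 1))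
  have hderiv : derivWithin f (Set.Icc 0 1) 0 = deriv f 0 :=
    (hf.differentiable two_ne_zero 0).derivWithin
      (uniqueDiffOn_Icc zero_lt_one 0 (Set.left_mem_Icc.2 zero_le_one))
  simp only [zero_le_one, Set.uIcc_of_le, taylorWithinEval_succ, taylor_within_zero_eval,
    CharP.cast_eq_zero, zero_add, Nat.factorial_zero, Nat.cast_one, mul_one, inv_one, sub_zero,
    one_pow, iteratedDerivWithin_one, hderiv, smul_eq_mul, one_mul, Nat.reduceAdd,
    Nat.factorial_two, Nat.cast_ofNat] at hu
  linarith [hK u]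

section

variable {E : Type*} [NormedAddCommGroup E] [InnerProductSpace ℝ E] [MeasurableSpace E]
  {μ : Measure E}

noncomputable def logLaplace (μ : Measure E) (y : E) : ℝ := log (∫ x, exp ⟪y, x⟫ ∂μ)

theorem integrableExpSet_inner_eq_univ (hμ : ∀ y : E, Integrable (fun x => exp ⟪y, x⟫) μ)
    (z : E) : integrableExpSet (fun x => ⟪z, x⟫) μ = Set.univ :=
  Set.eq_univ_of_forall fun t => by
    simpa only [integrableExpSet, Set.mem_ofPred_eq, real_inner_smul_left] using hμ (t • z)

theorem integrable_inner_of_integrable_exp_inner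
    (hμ : ∀ y : E, Integrable (fun x => exp ⟪y, x⟫) μ) (z : E) :
    Integrable (fun x => ⟪z, x⟫) μ :=
  integrable_of_mem_interior_integrableExpSet (by simp [integrableExpSet_inner_eq_univ hμ])

theorem integrable_id_of_integrable_exp_inner [FiniteDimensional ℝ E]
    (hμ : ∀ y : E, Integrable (fun x => exp ⟪y, x⟫) μ) : Integrable (fun x => x) μ := by
  let b := stdOrthonormalBasis ℝ E
  have hsum : (fun x => x) = fun x => ∑ i, ⟪b i, x⟫ • b i :=
    funext fun x => (b.sum_repr' x).symm
  rw [hsum]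
  exact integrable_finsetSum _ fun i _ =>
    (integrable_inner_of_integrable_exp_inner hμ _).smul_const _

theorem integrable_exp_inner_tilted (hμ : ∀ y : E, Integrable (fun x => exp ⟪y, x⟫) μ)
    (y w : E) : Integrable (fun x => exp ⟪w, x⟫) (μ.tilted (inner ℝ y)) := by
  rw [integrable_tilted_iff (hμ y)]
  simpa only [smul_eq_mul, inner_add_left, exp_add] using hμ (y + w)

theorem variance_inner_eq_integral [BorelSpace E] [CompleteSpace E] {ν : Measure E}
    (hν : Integrable (fun x => x) ν) (z : E) :
    Var[fun x => ⟪z, x⟫; ν] = ∫ x, ⟪z, x - ∫ x', x' ∂ν⟫ ^ 2 ∂ν := by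
  rw [variance_eq_integral (X := fun x => ⟪z, x⟫) (by fun_prop), integral_inner hν]
  simp only [inner_sub_right]

end

theorem integral_le_log_integral_exp {α : Type*} [MeasurableSpace α] {ν : Measure α}
    [IsProbabilityMeasure ν] {g : α → ℝ} (hg : Integrable g ν)
    (hexp : Integrable (fun x => exp (g x)) ν) : ∫ x, g x ∂ν ≤ log (∫ x, exp (g x) ∂ν) := by
  rw [le_log_iff_exp_le (integral_exp_pos hexp)]
  exact convexOn_exp.map_integral_le continuousOn_exp isClosed_univ (.of_forall fun _ => trivial)
    hg hexp

section

variable {E : Type*} [NormedAddCommGroup E] [InnerProductSpace ℝ E] [MeasurableSpace E]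
  {μ : Measure E} [IsProbabilityMeasure μ]

theorem klReal_tilted_inner (hμ : ∀ y : E, Integrable (fun x => exp ⟪y, x⟫) μ) (y : E) :
    klReal (μ.tilted (inner ℝ y)) μ = ∫ x, ⟪y, x⟫ ∂(μ.tilted (inner ℝ y)) - logLaplace μ y := by
  have := isProbabilityMeasure_tilted (hμ y)
  rw [klReal, integral_congr_ae ((tilted_absolutelyContinuous μ _).ae_le
      (log_rnDeriv_tilted_left_self (hμ y))),
    integral_sub (integrable_inner_of_integrable_exp_inner (integrable_exp_inner_tilted hμ y) y)
      (integrable_const _), integral_const, probReal_univ, one_smul, logLaplace]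

theorem logLaplace_add_integral_inner_sub_le (hμ : ∀ y : E, Integrable (fun x => exp ⟪y, x⟫) μ)
    (y z : E) :
    logLaplace μ y + ∫ x, ⟪z - y, x⟫ ∂(μ.tilted (inner ℝ y)) ≤ logLaplace μ z := by
  have := isProbabilityMeasure_tilted (hμ y)
  have hjensen := integral_le_log_integral_exp
    (integrable_inner_of_integrable_exp_inner (integrable_exp_inner_tilted hμ y) (z - y))
    (integrable_exp_inner_tilted hμ y (z - y))
  have hZ : ∫ x, exp ⟪z - y, x⟫ ∂(μ.tilted (inner ℝ y)) =
      (∫ x, exp ⟪z, x⟫ ∂μ) / ∫ x, exp ⟪y, x⟫ ∂μ := by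
    rw [integral_exp_tilted]
    simp only [Pi.add_apply, ← inner_add_left, add_sub_cancel]
  rw [hZ, log_div (integral_exp_pos (hμ z)).ne' (integral_exp_pos (hμ y)).ne'] at hjensen
  rw [logLaplace, logLaplace]
  linarith

theorem logLaplace_le_of_variance_le (hμ : ∀ y : E, Integrable (fun x => exp ⟪y, x⟫) μ)
    {z : E} {K : ℝ} (hK : ∀ t : ℝ, Var[fun x => ⟪z, x⟫; μ.tilted (inner ℝ (t • z))] ≤ K) :
    logLaplace μ z ≤ ∫ x, ⟪z, x⟫ ∂μ + K / 2 := by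
  have hint : ∀ t, t ∈ interior (integrableExpSet (fun x => ⟪z, x⟫) μ) := by
    simp [integrableExpSet_inner_eq_univ hμ]
  have hsmooth : ContDiff ℝ 2 (cgf (fun x => ⟪z, x⟫) μ) :=
    AnalyticOnNhd.contDiff fun t _ => analyticAt_cgf (hint t)
  have h := le_add_deriv_add_of_iteratedDeriv_two_le hsmooth fun t => by
    have htilt : (fun x => t * ⟪z, x⟫) = inner ℝ (t • z) :=
      funext fun x => (real_inner_smul_left z x t).symm
    rw [← variance_tilted_mul (hint t), htilt]
    exact hK t
  simpa [cgf, mgf, logLaplace, deriv_cgf_zero (hint 0)] using h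

theorem integral_inner_sub_le_klReal_tilted (hμ : ∀ y : E, Integrable (fun x => exp ⟪y, x⟫) μ)
    (y : E) {z : E} {K : ℝ}
    (hK : ∀ t : ℝ, Var[fun x => ⟪z, x⟫; μ.tilted (inner ℝ (t • z))] ≤ K) :
    ∫ x, ⟪z, x⟫ ∂(μ.tilted (inner ℝ y)) - ∫ x, ⟪z, x⟫ ∂μ - K / 2 ≤
      klReal (μ.tilted (inner ℝ y)) μ := by
  have hT := integrable_exp_inner_tilted hμ y
  have hsplit : ∫ x, ⟪z - y, x⟫ ∂(μ.tilted (inner ℝ y)) =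
      ∫ x, ⟪z, x⟫ ∂(μ.tilted (inner ℝ y)) - ∫ x, ⟪y, x⟫ ∂(μ.tilted (inner ℝ y)) := by
    simp only [inner_sub_left]
    exact integral_sub (integrable_inner_of_integrable_exp_inner hT z)
      (integrable_inner_of_integrable_exp_inner hT y)
  have hconvex := logLaplace_add_integral_inner_sub_le hμ y z
  have hsmooth := logLaplace_le_of_variance_le hμ hK
  rw [klReal_tilted_inner hμ y]
  linarith

end

theorem expTilt_eq_tilted (d : ℕ) (μ : Measure (EuclideanSpace ℝ (Fin d)))
    (y : EuclideanSpace ℝ (Fin d)) : expTilt d μ y = μ.tilted (inner ℝ y) := rfl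

/-- **Uniform covariance bounds on tilts imply entropic stability.**  Let `μ` be a
probability measure on `ℝ^d` whose cumulant generating function is finite everywhere,
and suppose `Cov(T_y μ) ⪯ α I_d` for every `y` (expressed via quadratic forms:
`E_{T_y μ}[⟨u, x - b(T_y μ)⟩²] ≤ α ‖u‖²` for every direction `u`).  Then `μ` is
`α`-entropically stable: `½‖b(T_y μ) - b(μ)‖² ≤ α · KL(T_y μ ‖ μ)` for all `y`. -/
theorem covariance_bound_implies_entropic_stability (d : ℕ)
    (μ : Measure (EuclideanSpace ℝ (Fin d))) [IsProbabilityMeasure μ]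
    (hcgf : ∀ y : EuclideanSpace ℝ (Fin d),
      Integrable (fun x => Real.exp ((inner ℝ y x : ℝ))) μ)
    (α : ℝ) (hα : 0 < α)
    (hcov : ∀ y u : EuclideanSpace ℝ (Fin d),
      ∫ x, ((inner ℝ u (x - bary d (expTilt d μ y)) : ℝ)) ^ 2 ∂(expTilt d μ y) ≤
        α * ‖u‖ ^ 2) :
    ∀ y : EuclideanSpace ℝ (Fin d),
      (1 / 2) * ‖bary d (expTilt d μ y) - bary d μ‖ ^ 2 ≤
        α * klReal (expTilt d μ y) μ := by
  intro y
  simp only [expTilt_eq_tilted, bary] at hcov ⊢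
  have hid (w) : Integrable (fun x => x) (μ.tilted (inner ℝ w)) :=
    integrable_id_of_integrable_exp_inner (integrable_exp_inner_tilted hcgf w)
  set v := ∫ x, x ∂(μ.tilted (inner ℝ y)) - ∫ x, x ∂μ
  -- the maximiser of `⟪z, v⟫ - α * ‖z‖ ^ 2 / 2`
  set z := α⁻¹ • v
  have hvar (t : ℝ) : Var[fun x => ⟪z, x⟫; μ.tilted (inner ℝ (t • z))] ≤ α * ‖z‖ ^ 2 := by
    rw [variance_inner_eq_integral (hid (t • z))]
    exact hcov (t • z) z
  have hkl := integral_inner_sub_le_klReal_tilted hcgf y hvar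
  rw [integral_inner (hid y), integral_inner (integrable_id_of_integrable_exp_inner hcgf),
    ← inner_sub_right] at hkl
  have hz : ⟪z, v⟫ - α * ‖z‖ ^ 2 / 2 = α⁻¹ * ‖v‖ ^ 2 / 2 := by
    rw [real_inner_smul_left, real_inner_self_eq_norm_sq, norm_smul, Real.norm_of_nonneg
      (inv_nonneg.2 hα.le)]
    field_simp
    ring
  calc 1 / 2 * ‖v‖ ^ 2 = α * (α⁻¹ * ‖v‖ ^ 2 / 2) := by field_simp
    _ ≤ α * klReal (μ.tilted (inner ℝ y)) μ := by gcongr; exact hz ▸ hkl
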